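/- Let N be a standard real subspace of a complex Hilbert space H, with Tomita operator s_N(h + ik) = h - ik for h, k ∈ N, and modular operator δ_N (where s_N = j_N δ_N^{1/2} is the polar decomposition). Then there exists a standard subspace M properly containing N if and only if 0 belongs to the spectrum of δ_N. -/

import Mathlib

/-!
If `δ_N^{1/2}` is bounded below then, because `‖δ_N^{1/2} (h - i k)‖ = ‖h + i k‖`, the Tomita
operator is bounded on `N + iN`; so `(h, k) ↦ h + i k` is antilipschitz on the complete space
`N × N`, `N + iN` is closed, hence all of `H`, and no `M ⊋ N` can have `M ∩ iM = 0`.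
Conversely, if the domain `N + iN` of `δ_N^{1/2}` were all of `H`, Hellinger–Toeplitz would make
`δ_N^{1/2}` bounded, and the same identity would bound it below. So some `η ∉ N + iN` exists, and
`N + ℝη` is a standard subspace properly containing `N`.
-/

open Complex NNReal

noncomputable def mulI (H : Type*) [NormedAddCommGroup H] [InnerProductSpace ℂ H] :
    H →ₗ[ℝ] H where
  toFun x := (Complex.I : ℂ) • x
  map_add' x y := smul_add _ x y
  map_smul' r x := by simpa using (smul_comm (Complex.I) r x)

section

variable {H : Type*} [NormedAddCommGroup H] [InnerProductSpace ℂ H]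

@[simp]
theorem mulI_apply (x : H) : mulI H x = I • x := rfl

theorem norm_map_eq_of_inner_map_map {j : H →ₗ[ℝ] H}
    (hj : ∀ x y : H, (inner ℂ (j x) (j y) : ℂ) = inner ℂ y x) (x : H) : ‖j x‖ = ‖x‖ := by
  rw [norm_eq_sqrt_re_inner (𝕜 := ℂ), norm_eq_sqrt_re_inner (𝕜 := ℂ) x, hj]

theorem le_of_inf_map_mulI_eq_bot {N M : Submodule ℝ H} (hNM : N ≤ M)
    (hM : M ⊓ M.map (mulI H) = ⊥) (hN : N ⊔ N.map (mulI H) = ⊤) : M ≤ N := by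
  intro m hm
  obtain ⟨h, hh, _, ⟨k, hk, rfl⟩, rfl⟩ :=
    Submodule.mem_sup.1 (hN ▸ Submodule.mem_top : m ∈ N ⊔ N.map (mulI H))
  have hIk : mulI H k ∈ M ⊓ M.map (mulI H) :=
    ⟨by simpa using M.sub_mem hm (hNM hh), k, hNM hk, rfl⟩
  rw [hM, Submodule.mem_bot] at hIk
  simpa [hIk] using hh

theorem inf_map_mulI_sup_span_singleton_eq_bot {N : Submodule ℝ H} (hN : N ⊓ N.map (mulI H) = ⊥)
    {D : Submodule ℂ H} (hND : N ≤ D.restrictScalars ℝ) {η : H} (hη : η ∉ D) :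
    (N ⊔ ℝ ∙ η) ⊓ (N ⊔ ℝ ∙ η).map (mulI H) = ⊥ := by
  rw [eq_bot_iff]
  rintro _ ⟨hIw, w, hw, rfl⟩
  obtain ⟨a, ha, _, ht, heq⟩ := Submodule.mem_sup.1 hIw
  obtain ⟨t, rfl⟩ := Submodule.mem_span_singleton.1 ht
  obtain ⟨b, hb, _, hu, rfl⟩ := Submodule.mem_sup.1 hw
  obtain ⟨u, rfl⟩ := Submodule.mem_span_singleton.1 hu
  change a + t • η = I • (b + u • η) at heq
  have hdiff : a - I • b = (u * I - t) • η := by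
    rw [sub_smul, mul_smul, Complex.coe_smul, Complex.coe_smul, smul_comm]
    linear_combination (norm := module) heq
  have hc : (u * I - t : ℂ) = 0 := by
    by_contra hc
    refine hη ?_
    have hD : a - I • b ∈ D := D.sub_mem (hND ha) (D.smul_mem I (hND hb))
    simpa [hdiff, smul_smul, inv_mul_cancel₀ hc] using D.smul_mem (u * I - t)⁻¹ hD
  obtain ⟨rfl, rfl⟩ : t = 0 ∧ u = 0 := by simpa [Complex.ext_iff] using hc
  simp only [zero_smul, add_zero] at heq
  have ha0 : a ∈ N ⊓ N.map (mulI H) := ⟨ha, b, hb, heq.symm⟩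
  rw [hN, Submodule.mem_bot] at ha0
  rw [mulI_apply, zero_smul, add_zero, ← heq, ha0]
  exact zero_mem _

theorem isClosed_sup_map_mulI_of_norm_sub_le [CompleteSpace H] {N : Submodule ℝ H}
    (hN : IsClosed (N : Set H)) {C : ℝ≥0}
    (hC : ∀ h ∈ N, ∀ k ∈ N, ‖h - I • k‖ ≤ C * ‖h + I • k‖) :
    IsClosed ((N ⊔ N.map (mulI H) : Submodule ℝ H) : Set H) := by
  have := hN.completeSpace_coe
  let Φ : N × N →ₗ[ℝ] H := N.subtype.coprod (mulI H ∘ₗ N.subtype)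
  have hrange : N ⊔ N.map (mulI H) = LinearMap.range Φ := by
    rw [LinearMap.range_coprod, LinearMap.range_comp, Submodule.range_subtype]
  have hΦ : ∀ p : N × N, Φ p = p.1 + I • p.2 := fun _ => rfl
  have hlip : LipschitzWith (Real.toNNReal 2) Φ := by
    refine AddMonoidHomClass.lipschitz_of_bound Φ 2 fun p => ?_
    rw [hΦ]
    calc ‖(p.1 : H) + I • p.2‖ ≤ ‖p.1‖ + ‖p.2‖ := by
          simpa [norm_smul] using norm_add_le (p.1 : H) (I • p.2)
      _ ≤ 2 * ‖p‖ := by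
          linarith [norm_fst_le p, norm_snd_le p]
  have hanti : AntilipschitzWith (1 + C) Φ := by
    refine AddMonoidHomClass.antilipschitz_of_bound Φ fun p => ?_
    obtain ⟨⟨h, hh⟩, ⟨k, hk⟩⟩ := p
    set x := h + I • k
    have hbound := hC h hh k hk
    have h2h : (2 : ℝ) • h = x + (h - I • k) := by module
    have h2k : (2 : ℝ) • (I • k) = x - (h - I • k) := by module
    have hnh : 2 * ‖h‖ ≤ (1 + C) * ‖x‖ := by
      calc 2 * ‖h‖ = ‖(2 : ℝ) • h‖ := by simp [norm_smul]
        _ ≤ ‖x‖ + ‖h - I • k‖ := h2h ▸ norm_add_le _ _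
        _ ≤ (1 + C) * ‖x‖ := by linarith
    have hnk : 2 * ‖k‖ ≤ (1 + C) * ‖x‖ := by
      calc 2 * ‖k‖ = ‖(2 : ℝ) • (I • k)‖ := by simp [norm_smul]
        _ ≤ ‖x‖ + ‖h - I • k‖ := h2k ▸ norm_sub_le _ _
        _ ≤ (1 + C) * ‖x‖ := by linarith
    rw [hΦ, Prod.norm_def, NNReal.coe_add, NNReal.coe_one]
    exact max_le (by simp only [Submodule.coe_norm]; linarith [norm_nonneg h])
      (by simp only [Submodule.coe_norm]; linarith [norm_nonneg k])
  rw [hrange, LinearMap.coe_range]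
  exact hanti.isClosed_range hlip.uniformContinuous

theorem norm_apply_eq_of_eq_add_smul_I {N : Submodule ℝ H} {j : H →ₗ[ℝ] H}
    (hj : ∀ x y : H, (inner ℂ (j x) (j y) : ℂ) = inner ℂ y x) {T : H →ₗ.[ℂ] H}
    (hs : ∀ h ∈ N, ∀ k ∈ N, ∃ hmem : h + I • k ∈ T.domain, j (T ⟨h + I • k, hmem⟩) = h - I • k)
    {h k : H} (hh : h ∈ N) (hk : k ∈ N) (x : T.domain) (hx : (x : H) = h + I • k) :
    ‖T x‖ = ‖h - I • k‖ := by
  obtain ⟨hmem, heq⟩ := hs h hh k hk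
  obtain rfl : x = ⟨_, hmem⟩ := Subtype.ext hx
  rw [← norm_map_eq_of_inner_map_map hj, heq]

theorem norm_apply_eq_of_eq_sub_smul_I {N : Submodule ℝ H} {j : H →ₗ[ℝ] H}
    (hj : ∀ x y : H, (inner ℂ (j x) (j y) : ℂ) = inner ℂ y x) {T : H →ₗ.[ℂ] H}
    (hs : ∀ h ∈ N, ∀ k ∈ N, ∃ hmem : h + I • k ∈ T.domain, j (T ⟨h + I • k, hmem⟩) = h - I • k)
    {h k : H} (hh : h ∈ N) (hk : k ∈ N) (x : T.domain) (hx : (x : H) = h - I • k) :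
    ‖T x‖ = ‖h + I • k‖ := by
  simpa using norm_apply_eq_of_eq_add_smul_I hj hs hh (N.neg_mem hk) x (by rw [hx]; module)

theorem norm_sub_smul_I_le_of_le_norm_apply {N : Submodule ℝ H} {j : H →ₗ[ℝ] H}
    (hj : ∀ x y : H, (inner ℂ (j x) (j y) : ℂ) = inner ℂ y x) {T : H →ₗ.[ℂ] H}
    (hs : ∀ h ∈ N, ∀ k ∈ N, ∃ hmem : h + I • k ∈ T.domain, j (T ⟨h + I • k, hmem⟩) = h - I • k)
    {c : ℝ} (hc : 0 < c) (hbd : ∀ x : T.domain, c * ‖(x : H)‖ ≤ ‖T x‖) {h k : H}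
    (hh : h ∈ N) (hk : k ∈ N) : ‖h - I • k‖ ≤ c⁻¹ * ‖h + I • k‖ := by
  obtain ⟨hmem, -⟩ := hs h hh (-k) (N.neg_mem hk)
  have hy : h + I • -k = h - I • k := by module
  have := hbd ⟨_, hmem⟩
  rw [norm_apply_eq_of_eq_sub_smul_I hj hs hh hk _ hy, Submodule.coe_mk, hy] at this
  rwa [le_inv_mul_iff₀ hc]

theorem exists_le_norm_apply_of_norm_apply_le {N : Submodule ℝ H} {j : H →ₗ[ℝ] H}
    (hj : ∀ x y : H, (inner ℂ (j x) (j y) : ℂ) = inner ℂ y x) {T : H →ₗ.[ℂ] H}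
    (hs : ∀ h ∈ N, ∀ k ∈ N, ∃ hmem : h + I • k ∈ T.domain, j (T ⟨h + I • k, hmem⟩) = h - I • k)
    (hdom : ∀ x ∈ T.domain, ∃ h ∈ N, ∃ k ∈ N, x = h + I • k)
    {C : ℝ} (hC : 0 < C) (hbd : ∀ x : T.domain, ‖T x‖ ≤ C * ‖(x : H)‖) :
    ∃ c > (0 : ℝ), ∀ x : T.domain, c * ‖(x : H)‖ ≤ ‖T x‖ := by
  refine ⟨C⁻¹, inv_pos.2 hC, fun x => ?_⟩
  obtain ⟨h, hh, k, hk, hx⟩ := hdom x x.2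
  obtain ⟨hmem, -⟩ := hs h hh (-k) (N.neg_mem hk)
  have hy : h + I • -k = h - I • k := by module
  have := hbd ⟨_, hmem⟩
  rw [norm_apply_eq_of_eq_sub_smul_I hj hs hh hk _ hy, Submodule.coe_mk, hy, ← hx,
    ← norm_apply_eq_of_eq_add_smul_I hj hs hh hk x hx] at this
  rwa [inv_mul_le_iff₀ hC]

end

theorem LinearPMap.exists_bound_of_domain_eq_top {𝕜 E : Type*} [RCLike 𝕜]
    [NormedAddCommGroup E] [InnerProductSpace 𝕜 E] [CompleteSpace E] {T : E →ₗ.[𝕜] E}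
    (hT : T.IsFormalAdjoint T) (htop : T.domain = ⊤) :
    ∃ C, 0 < C ∧ ∀ x : T.domain, ‖T x‖ ≤ C * ‖(x : E)‖ := by
  let S : E →ₗ[𝕜] E := T.toFun ∘ₗ (LinearEquiv.ofTop _ htop).symm.toLinearMap
  have hS : S.IsSymmetric := fun x y => by
    simpa [S] using hT ((LinearEquiv.ofTop _ htop).symm x) ((LinearEquiv.ofTop _ htop).symm y)
  obtain ⟨C, hC, hbd⟩ := SemilinearMapClass.bound_of_continuous S hS.continuous
  refine ⟨C, hC, fun x => ?_⟩
  simpa [S, LinearEquiv.ofTop_symm_apply] using hbd x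

/-- `0 ∈ σ(δ_N)` is encoded as "`δ_N^{1/2}` is not bounded below", which is equivalent for the
injective positive self-adjoint operator `δ_N^{1/2}` by spectral mapping. -/
theorem exists_standard_extension_iff_zero_in_spectrum_general {H : Type*}
    [NormedAddCommGroup H] [InnerProductSpace ℂ H] [CompleteSpace H]
    (N : Submodule ℝ H) (hNc : IsClosed (N : Set H))
    (hstd1 : N ⊓ N.map (mulI H) = ⊥)
    (hstd2 : (N ⊔ N.map (mulI H)).topologicalClosure = ⊤)
    (j : H →ₗ[ℝ] H)
    (hjanti : ∀ x y : H, (inner ℂ (j x) (j y) : ℂ) = inner ℂ y x)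
    (sqrtδ : H →ₗ.[ℂ] H)
    (hsa : ∀ x y : sqrtδ.domain, (inner ℂ (sqrtδ x) (y : H) : ℂ) = inner ℂ (x : H) (sqrtδ y))
    (hs : ∀ h ∈ N, ∀ k ∈ N, ∃ hmem : h + Complex.I • k ∈ sqrtδ.domain,
        j (sqrtδ ⟨h + Complex.I • k, hmem⟩) = h - Complex.I • k)
    (hdom : ∀ x ∈ sqrtδ.domain, ∃ h ∈ N, ∃ k ∈ N, x = h + Complex.I • k) :
    (∃ M : Submodule ℝ H, IsClosed (M : Set H) ∧ M ⊓ M.map (mulI H) = ⊥ ∧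
        (M ⊔ M.map (mulI H)).topologicalClosure = ⊤ ∧ N < M)
      ↔ ¬ ∃ c > (0:ℝ), ∀ x : sqrtδ.domain, c * ‖(x : H)‖ ≤ ‖sqrtδ x‖ := by
  constructor
  · rintro ⟨M, -, hM, -, hNM⟩ ⟨c, hc, hbd⟩
    have hclosed := isClosed_sup_map_mulI_of_norm_sub_le hNc (C := ⟨c⁻¹, by positivity⟩)
      fun h hh k hk => norm_sub_smul_I_le_of_le_norm_apply hjanti hs hc hbd hh hk
    have htop : N ⊔ N.map (mulI H) = ⊤ := by rwa [← hclosed.submodule_topologicalClosure_eq]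
    exact hNM.not_ge (le_of_inf_map_mulI_eq_bot hNM.le hM htop)
  · intro hnb
    have hD : sqrtδ.domain ≠ ⊤ := fun htop => by
      obtain ⟨C, hC, hbd⟩ := LinearPMap.exists_bound_of_domain_eq_top hsa htop
      exact hnb (exists_le_norm_apply_of_norm_apply_le hjanti hs hdom hC hbd)
    obtain ⟨η, hη⟩ := SetLike.exists_not_mem_of_ne_top _ hD
    have hNdom : N ≤ sqrtδ.domain.restrictScalars ℝ := fun h hh => by
      simpa using (hs h hh 0 N.zero_mem).1
    refine ⟨N ⊔ ℝ ∙ η, N.isClosed_sup_finiteDimensional _ hNc,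
      inf_map_mulI_sup_span_singleton_eq_bot hstd1 hNdom hη, ?_,
      Submodule.lt_sup_iff_notMem.2 fun hηN => hη (hNdom hηN)⟩
    exact eq_top_iff.2 (hstd2 ▸ Submodule.topologicalClosure_mono
      (sup_le_sup le_sup_left (Submodule.map_mono le_sup_left)))

/-- Let `N` be a standard subspace with Tomita operator
`s_N = j ∘ δ_N^{1/2}` (polar decomposition, `j` the anti-unitary modular
conjugation, `sqrtδ` the positive self-adjoint square root of the modular
operator `δ_N`).  There exists a standard subspace `M` properly containing `N`
iff `0 ∈ σ(δ_N)`.  Since `δ_N` (equivalently, by spectral mapping, its square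
root `δ_N^{1/2}`) is an injective positive self-adjoint operator, the spectral
condition `0 ∈ σ(δ_N)` is expressed as: `δ_N^{1/2}` is not bounded below. -/
theorem exists_standard_extension_iff_zero_in_spectrum {H : Type*}
    [NormedAddCommGroup H] [InnerProductSpace ℂ H] [CompleteSpace H]
    (N : Submodule ℝ H) (hNc : IsClosed (N : Set H))
    (hstd1 : N ⊓ N.map (mulI H) = ⊥)
    (hstd2 : (N ⊔ N.map (mulI H)).topologicalClosure = ⊤)
    (j : H →ₗ[ℝ] H)
    (hjinv : ∀ x, j (j x) = x)
    (hjconj : ∀ x, j (Complex.I • x) = -(Complex.I • j x))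
    (hjanti : ∀ x y : H, (inner ℂ (j x) (j y) : ℂ) = inner ℂ y x)
    (sqrtδ : H →ₗ.[ℂ] H)
    (hdense : Dense (sqrtδ.domain : Set H))
    (hsa : ∀ x y : sqrtδ.domain, (inner ℂ (sqrtδ x) (y : H) : ℂ) = inner ℂ (x : H) (sqrtδ y))
    (hpos : ∀ x : sqrtδ.domain, 0 ≤ (inner ℂ (x : H) (sqrtδ x) : ℂ).re)
    (hinj : ∀ x : sqrtδ.domain, sqrtδ x = 0 → (x : H) = 0)
    (hs : ∀ h ∈ N, ∀ k ∈ N, ∃ hmem : h + Complex.I • k ∈ sqrtδ.domain,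
        j (sqrtδ ⟨h + Complex.I • k, hmem⟩) = h - Complex.I • k)
    (hdom : ∀ x ∈ sqrtδ.domain, ∃ h ∈ N, ∃ k ∈ N, x = h + Complex.I • k) :
    (∃ M : Submodule ℝ H, IsClosed (M : Set H) ∧ M ⊓ M.map (mulI H) = ⊥ ∧
        (M ⊔ M.map (mulI H)).topologicalClosure = ⊤ ∧ N < M)
      ↔ ¬ ∃ c > (0:ℝ), ∀ x : sqrtδ.domain, c * ‖(x : H)‖ ≤ ‖sqrtδ x‖ :=
  exists_standard_extension_iff_zero_in_spectrum_general N hNc hstd1 hstd2 j hjanti sqrtδ hsa hs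
    hdom
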